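/- arXiv:2206.05543 — 8 statements merged into one kernel-verified Lean document; each statement's English description precedes it below -/
import Mathlib

section
/- Define f(x₁,x₂,x₃) = (4 + x₁ + x₂ + x₃)(3 - x₁ - x₂ - x₃) on X^H = [-1,1]³ \ (0,1]³. Then the minimum of f over X^H equals 6 and the maximum equals 49/4. -/
/-! The function depends only on `s = x₁ + x₂ + x₃`, and `(4 + s)(3 - s) = 49/4 - (s + 1/2)² =
6 + (s + 3)(2 - s)`. On `X^H` some coordinate is `≤ 0`, so `s ∈ [-3, 2]`; the minimum `6` is attained
at `s = -3` and the maximum `49/4` at `s = -1/2`. -/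

lemma add_add_le_two_of_not_mem_Ioc {x y z : ℝ} (hx : x ≤ 1) (hy : y ≤ 1) (hz : z ≤ 1)
    (hxyz : ¬(x ∈ Set.Ioc (0:ℝ) 1 ∧ y ∈ Set.Ioc (0:ℝ) 1 ∧ z ∈ Set.Ioc (0:ℝ) 1)) :
    x + y + z ≤ 2 := by
  have hnonpos : x ≤ 0 ∨ y ≤ 0 ∨ z ≤ 0 := by
    by_contra! h
    exact hxyz ⟨⟨h.1, hx⟩, ⟨h.2.1, hy⟩, ⟨h.2.2, hz⟩⟩
  rcases hnonpos with h | h | h <;> linarith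

lemma four_add_mul_three_sub_le (s : ℝ) : (4 + s) * (3 - s) ≤ 49 / 4 := by
  nlinarith [sq_nonneg (s + 1 / 2)]

lemma six_le_four_add_mul_three_sub {s : ℝ} (hs : s ∈ Set.Icc (-3 : ℝ) 2) :
    6 ≤ (4 + s) * (3 - s) := by
  nlinarith [mul_nonneg (sub_nonneg.2 hs.1) (sub_nonneg.2 hs.2)]

theorem stmt_2 :
    IsLeast ((fun p : ℝ × ℝ × ℝ =>
        (4 + p.1 + p.2.1 + p.2.2) * (3 - p.1 - p.2.1 - p.2.2)) ''
      {p : ℝ × ℝ × ℝ |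
        (p.1 ∈ Set.Icc (-1:ℝ) 1 ∧ p.2.1 ∈ Set.Icc (-1:ℝ) 1 ∧ p.2.2 ∈ Set.Icc (-1:ℝ) 1) ∧
        ¬(p.1 ∈ Set.Ioc (0:ℝ) 1 ∧ p.2.1 ∈ Set.Ioc (0:ℝ) 1 ∧ p.2.2 ∈ Set.Ioc (0:ℝ) 1)}) 6 ∧
    IsGreatest ((fun p : ℝ × ℝ × ℝ =>
        (4 + p.1 + p.2.1 + p.2.2) * (3 - p.1 - p.2.1 - p.2.2)) ''
      {p : ℝ × ℝ × ℝ |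
        (p.1 ∈ Set.Icc (-1:ℝ) 1 ∧ p.2.1 ∈ Set.Icc (-1:ℝ) 1 ∧ p.2.2 ∈ Set.Icc (-1:ℝ) 1) ∧
        ¬(p.1 ∈ Set.Ioc (0:ℝ) 1 ∧ p.2.1 ∈ Set.Ioc (0:ℝ) 1 ∧ p.2.2 ∈ Set.Ioc (0:ℝ) 1)})
      (49 / 4) := by
  have h_sum (x y z : ℝ) :
      (4 + x + y + z) * (3 - x - y - z) = (4 + (x + y + z)) * (3 - (x + y + z)) := by ring
  refine ⟨⟨⟨(-1, -1, -1), by norm_num⟩, ?_⟩, ⟨⟨(-1 / 2, 0, 0), by norm_num⟩, ?_⟩⟩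
  · rintro _ ⟨⟨x, y, z⟩, ⟨⟨hx, hy, hz⟩, hxyz⟩, rfl⟩
    dsimp only
    rw [h_sum]
    exact six_le_four_add_mul_three_sub
      ⟨by linarith [hx.1, hy.1, hz.1], add_add_le_two_of_not_mem_Ioc hx.2 hy.2 hz.2 hxyz⟩
  · rintro _ ⟨⟨x, y, z⟩, -, rfl⟩
    dsimp only
    rw [h_sum]
    exact four_add_mul_three_sub_le _
end

section
/- Suppose b > 1, b > |a|, and b - 2a + 1 > 0. For f_{a,b}(x₁,x₂) = (b + a(x₁+x₂) + x₁x₂)(2 - x₁ - x₂) restricted to X₁ = {(x₁,x₂) : -1 ≤ x₁ ≤ 0, -x₁ ≤ x₂ ≤ 1}, the minimum equals min{b+a, 2b-2}. -/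
/-! On `X₁` we have `t := x₁ + x₂ ∈ [0, 1]` and `x₁ x₂ ≥ t - 1` (as `(1 - x₁)(1 - x₂) ≥ 0`), with
equality on the edge `x₂ = 1`. Hence `f` is bounded below by the quadratic `u(t)`, and `u` is
minimised over `[0, 1]` at an endpoint: `u(0) = 2b - 2` (attained at `(-1, 1)`) or
`u(1) = b + a` (attained at `(0, 1)`). -/

/-- The lower envelope `u_{a,b}`. -/
def lowerEnvelope (a b t : ℝ) : ℝ := (b + a * t + t - 1) * (2 - t)

theorem add_sub_one_le_mul {x y : ℝ} (hx : x ≤ 1) (hy : y ≤ 1) : x + y - 1 ≤ x * y := by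
  nlinarith [mul_nonneg (sub_nonneg.2 hx) (sub_nonneg.2 hy)]

theorem lowerEnvelope_le {a b x y : ℝ} (hx : x ≤ 1) (hy : y ≤ 1) :
    lowerEnvelope a b (x + y) ≤ (b + a * (x + y) + x * y) * (2 - x - y) := by
  rw [lowerEnvelope, ← sub_sub]
  exact mul_le_mul_of_nonneg_right (by linarith [add_sub_one_le_mul hx hy]) (by linarith)

theorem min_le_lowerEnvelope (a : ℝ) {b t : ℝ} (hb : 1 ≤ b) (ht₀ : 0 ≤ t) (ht₁ : t ≤ 1) :
    min (b + a) (2 * b - 2) ≤ lowerEnvelope a b t := by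
  have hu : lowerEnvelope a b t = (b + a) + (b - 1) * (1 - t) - (a + 1) * (1 - t) ^ 2 := by
    rw [lowerEnvelope]; ring
  rw [hu]
  rcases le_total 0 (a + 1) with ha | ha
  · -- concave in `s = 1 - t`: `u` exceeds its chord by `(a + 1) s (1 - s)`
    have hchord : 0 ≤ (a + 1) * ((1 - t) * t) := mul_nonneg ha (mul_nonneg (by linarith) ht₀)
    rcases le_total (b + a) (2 * b - 2) with h | h
    · rw [min_eq_left h]; nlinarith
    · rw [min_eq_right h]; nlinarith
  · -- convex in `s = 1 - t`: both `s`-terms are nonnegative, so `u ≥ u(1) = b + a`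
    have hs : 0 ≤ (b - 1) * (1 - t) := mul_nonneg (by linarith) (by linarith)
    have hs2 : 0 ≤ -(a + 1) * (1 - t) ^ 2 := mul_nonneg (by linarith) (sq_nonneg _)
    exact (min_le_left _ _).trans (by linarith)

theorem stmt_7_general (a b : ℝ) (hb : 1 < b) :
    IsLeast ((fun p : ℝ × ℝ => (b + a * (p.1 + p.2) + p.1 * p.2) * (2 - p.1 - p.2)) ''
        {p : ℝ × ℝ | -1 ≤ p.1 ∧ p.1 ≤ 0 ∧ -p.1 ≤ p.2 ∧ p.2 ≤ 1})
      (min (b + a) (2 * b - 2)) := by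
  constructor
  · rcases le_total (b + a) (2 * b - 2) with h | h
    · refine ⟨(0, 1), by norm_num, ?_⟩
      rw [min_eq_left h]; ring
    · refine ⟨(-1, 1), by norm_num, ?_⟩
      rw [min_eq_right h]; ring
  · rintro v ⟨⟨x, y⟩, ⟨hx₁, hx₂, hy₁, hy₂⟩, rfl⟩
    exact (min_le_lowerEnvelope a hb.le (by linarith) (by linarith)).trans
      (lowerEnvelope_le (by linarith) hy₂)

theorem stmt_7 (a b : ℝ) (hb : 1 < b) (hab : |a| < b) (hba : 0 < b - 2 * a + 1) :
    IsLeast ((fun p : ℝ × ℝ => (b + a * (p.1 + p.2) + p.1 * p.2) * (2 - p.1 - p.2)) ''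
        {p : ℝ × ℝ | -1 ≤ p.1 ∧ p.1 ≤ 0 ∧ -p.1 ≤ p.2 ∧ p.2 ≤ 1})
      (min (b + a) (2 * b - 2)) :=
  stmt_7_general a b hb
end

section
/- Suppose b > 1, b > |a|, and b - 2a + 1 > 0. For f_{a,b}(x₁,x₂) = (b + a(x₁+x₂) + x₁x₂)(2 - x₁ - x₂) restricted to X₁ = {(x₁,x₂) : -1 ≤ x₁ ≤ 0, -x₁ ≤ x₂ ≤ 1}, the maximum equals 2b if b ≥ 2a, and equals (b+2a)²/(4a) if b ≤ 2a. -/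
/-!
Since `x₁ ≤ 0 ≤ x₂` on `X₁`, the term `x₁ x₂ (2 - x₁ - x₂)` is nonpositive, so `f_{a,b}` is
bounded by the envelope `U_{a,b}(t) = (b + a t)(2 - t)` of `t = x₁ + x₂ ∈ [0, 1]`, with equality
on the edge `x₁ = 0`. If `2a ≤ b` then `2b - U_{a,b}(t) = t (b - 2a + a t) ≥ 0`, the second factor
being affine in `t` and nonnegative at both ends. If `b ≤ 2a` then `a > 0`, and `U_{a,b}` is a
concave quadratic whose vertex `(2a - b) / (2a)` lies in `[0, 1]`, with value `(b + 2a)² / (4a)`.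
-/

open Set

namespace Fab

def f (a b : ℝ) (p : ℝ × ℝ) : ℝ := (b + a * (p.1 + p.2) + p.1 * p.2) * (2 - p.1 - p.2)

def X₁ : Set (ℝ × ℝ) := {p | -1 ≤ p.1 ∧ p.1 ≤ 0 ∧ -p.1 ≤ p.2 ∧ p.2 ≤ 1}

def envelope (a b t : ℝ) : ℝ := (b + a * t) * (2 - t)

variable {a b : ℝ}

lemma f_le_envelope {p : ℝ × ℝ} (hp : p ∈ X₁) : f a b p ≤ envelope a b (p.1 + p.2) := by
  obtain ⟨-, hx, hxy, hy⟩ := hp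
  have hprod : p.1 * p.2 ≤ 0 := mul_nonpos_of_nonpos_of_nonneg hx (by linarith)
  have hfactor : 0 ≤ 2 - p.1 - p.2 := by linarith
  have := mul_nonpos_of_nonpos_of_nonneg hprod hfactor
  unfold f envelope
  nlinarith

lemma f_zero_left (t : ℝ) : f a b (0, t) = envelope a b t := by
  simp [f, envelope]

lemma sum_mem_Icc_of_mem_X₁ {p : ℝ × ℝ} (hp : p ∈ X₁) :
    p.1 + p.2 ∈ Icc (0 : ℝ) 1 := by
  obtain ⟨-, hx, hxy, hy⟩ := hp
  constructor <;> linarith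

lemma zero_mem_X₁_of_mem_Icc {t : ℝ} (ht : t ∈ Icc (0 : ℝ) 1) :
    ((0 : ℝ), t) ∈ X₁ := by
  obtain ⟨ht0, ht1⟩ := ht
  exact ⟨by norm_num, le_rfl, by simpa using ht0, ht1⟩

lemma isGreatest_image_f_of_envelope {m : ℝ} (h : IsGreatest (envelope a b '' Icc 0 1) m) :
    IsGreatest (f a b '' X₁) m := by
  obtain ⟨⟨t, ht, rfl⟩, hub⟩ := h
  refine ⟨⟨(0, t), zero_mem_X₁_of_mem_Icc ht, f_zero_left t⟩, ?_⟩
  rintro _ ⟨p, hp, rfl⟩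
  exact (f_le_envelope hp).trans (hub ⟨_, sum_mem_Icc_of_mem_X₁ hp, rfl⟩)

lemma isGreatest_envelope_of_two_mul_le (hb : 0 < b) (h : 2 * a ≤ b) :
    IsGreatest (envelope a b '' Icc 0 1) (2 * b) := by
  refine ⟨⟨0, ⟨le_rfl, zero_le_one⟩, by simp only [envelope]; ring⟩, ?_⟩
  rintro _ ⟨t, ⟨ht0, ht1⟩, rfl⟩
  have hlin : 0 ≤ b - 2 * a + a * t := by
    rcases le_or_gt 0 a with ha | ha <;> nlinarith
  have := mul_nonneg ht0 hlin
  unfold envelope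
  nlinarith

lemma isGreatest_envelope_of_le_two_mul (hb : 0 < b) (h : b ≤ 2 * a) :
    IsGreatest (envelope a b '' Icc 0 1) ((b + 2 * a) ^ 2 / (4 * a)) := by
  have ha : 0 < a := by linarith
  refine ⟨⟨(2 * a - b) / (2 * a), ⟨?_, ?_⟩, ?_⟩, ?_⟩
  · exact div_nonneg (by linarith) (by linarith)
  · rw [div_le_one (by linarith)]
    linarith
  · unfold envelope
    field_simp
    ring
  · rintro _ ⟨t, -, rfl⟩
    rw [le_div_iff₀ (by linarith)]
    -- `(b + 2a)² - 4a U(t) = (2a t - (2a - b))²`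
    have := sq_nonneg (2 * a * t - (2 * a - b))
    unfold envelope
    nlinarith

end Fab

theorem stmt_8_general (a b : ℝ) (hb : 1 < b) :
    (2 * a ≤ b →
      IsGreatest ((fun p : ℝ × ℝ =>
          (b + a * (p.1 + p.2) + p.1 * p.2) * (2 - p.1 - p.2)) ''
        {p : ℝ × ℝ | -1 ≤ p.1 ∧ p.1 ≤ 0 ∧ -p.1 ≤ p.2 ∧ p.2 ≤ 1}) (2 * b)) ∧
    (b ≤ 2 * a →
      IsGreatest ((fun p : ℝ × ℝ =>
          (b + a * (p.1 + p.2) + p.1 * p.2) * (2 - p.1 - p.2)) ''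
        {p : ℝ × ℝ | -1 ≤ p.1 ∧ p.1 ≤ 0 ∧ -p.1 ≤ p.2 ∧ p.2 ≤ 1})
        ((b + 2 * a) ^ 2 / (4 * a))) := by
  have hb₀ : 0 < b := by linarith
  exact ⟨fun h => Fab.isGreatest_image_f_of_envelope
      (Fab.isGreatest_envelope_of_two_mul_le hb₀ h),
    fun h => Fab.isGreatest_image_f_of_envelope (Fab.isGreatest_envelope_of_le_two_mul hb₀ h)⟩

theorem stmt_8 (a b : ℝ) (hb : 1 < b) (hab : |a| < b) (hba : 0 < b - 2 * a + 1) :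
    (2 * a ≤ b →
      IsGreatest ((fun p : ℝ × ℝ =>
          (b + a * (p.1 + p.2) + p.1 * p.2) * (2 - p.1 - p.2)) ''
        {p : ℝ × ℝ | -1 ≤ p.1 ∧ p.1 ≤ 0 ∧ -p.1 ≤ p.2 ∧ p.2 ≤ 1}) (2 * b)) ∧
    (b ≤ 2 * a →
      IsGreatest ((fun p : ℝ × ℝ =>
          (b + a * (p.1 + p.2) + p.1 * p.2) * (2 - p.1 - p.2)) ''
        {p : ℝ × ℝ | -1 ≤ p.1 ∧ p.1 ≤ 0 ∧ -p.1 ≤ p.2 ∧ p.2 ≤ 1})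
        ((b + 2 * a) ^ 2 / (4 * a))) :=
  stmt_8_general a b hb
end

section
/- Suppose b > 1 and b - 2a + 1 > 0. For f_{a,b}(x₁,x₂) = (b + a(x₁+x₂) + x₁x₂)(2 - x₁ - x₂) restricted to X₂ = {(x₁,x₂) : -1 ≤ x₁ ≤ 0, x₁ ≤ x₂ ≤ -x₁}, the minimum equals min{4(b - 2a + 1), 2b - 2}. -/
/-!
On `X₂` we have `(1 + x₁)(1 + x₂) ≥ 0` and `2 - x₁ - x₂ ≥ 0`, so replacing `x₁x₂` by its lower
bound `-(x₁ + x₂) - 1` bounds `f` from below by the quadratic `v_{a,b}(t)` in `t = -(x₁ + x₂) ∈ [0, 2]`.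
When `b > 1`, `v_{a,b}` is minimised at an endpoint of `[0, 2]`, and the endpoint values
`2b - 2` and `4(b - 2a + 1)` are attained at `(-1, 1)` and `(-1, -1)`.
-/

def lowerProfile (a b t : ℝ) : ℝ := (b - a * t + t - 1) * (2 + t)

lemma lowerProfile_le (a b : ℝ) {x y : ℝ} (hx : -1 ≤ x) (hy : -1 ≤ y) (hxy : x + y ≤ 2) :
    lowerProfile a b (-(x + y)) ≤ (b + a * (x + y) + x * y) * (2 - x - y) := by
  have hprod : -(x + y) - 1 ≤ x * y := by
    nlinarith [mul_nonneg (by linarith : 0 ≤ 1 + x) (by linarith : 0 ≤ 1 + y)]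
  unfold lowerProfile
  have key : (b - a * -(x + y) + -(x + y) - 1) * (2 + -(x + y)) =
      (b + a * (x + y) + (-(x + y) - 1)) * (2 - x - y) := by ring
  rw [key]
  exact mul_le_mul_of_nonneg_right (by linarith) (by linarith)

lemma lowerProfile_sub_zero (a b t : ℝ) :
    lowerProfile a b t - lowerProfile a b 0 = t * (b - 1 + (1 - a) * (2 + t)) := by
  unfold lowerProfile; ring

lemma lowerProfile_sub_two (a b t : ℝ) :
    lowerProfile a b t - lowerProfile a b 2 = (2 - t) * (1 - b + (a - 1) * (t + 4)) := by
  unfold lowerProfile; ring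

lemma min_lowerProfile_le {a b t : ℝ} (hb : 1 < b) (ht : t ∈ Set.Icc (0 : ℝ) 2) :
    min (lowerProfile a b 2) (lowerProfile a b 0) ≤ lowerProfile a b t := by
  obtain ⟨ht0, ht2⟩ := ht
  by_cases hslope : 0 ≤ b - 1 + (1 - a) * (2 + t)
  · have := lowerProfile_sub_zero a b t
    exact min_le_of_right_le (by nlinarith [mul_nonneg ht0 hslope])
  · -- a negative slope at `t` forces `a > 1`, and then the slope towards `2` is negative too
    have ha : 1 < a := by nlinarith
    have hslope2 : 0 ≤ 1 - b + (a - 1) * (t + 4) := by nlinarith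
    have := lowerProfile_sub_two a b t
    exact min_le_of_left_le (by nlinarith [mul_nonneg (sub_nonneg.2 ht2) hslope2])

theorem stmt_9_general (a b : ℝ) (hb : 1 < b) :
    IsLeast ((fun p : ℝ × ℝ => (b + a * (p.1 + p.2) + p.1 * p.2) * (2 - p.1 - p.2)) ''
        {p : ℝ × ℝ | -1 ≤ p.1 ∧ p.1 ≤ 0 ∧ p.1 ≤ p.2 ∧ p.2 ≤ -p.1})
      (min (4 * (b - 2 * a + 1)) (2 * b - 2)) := by
  have h2 : lowerProfile a b 2 = 4 * (b - 2 * a + 1) := by unfold lowerProfile; ring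
  have h0 : lowerProfile a b 0 = 2 * b - 2 := by unfold lowerProfile; ring
  refine ⟨?_, ?_⟩
  · rcases min_choice (4 * (b - 2 * a + 1)) (2 * b - 2) with h | h <;> rw [h]
    · exact ⟨(-1, -1), by norm_num, by norm_num; ring⟩
    · exact ⟨(-1, 1), by norm_num, by norm_num; ring⟩
  · rintro _ ⟨⟨x, y⟩, ⟨hx, hx0, hxy, hyx⟩, rfl⟩
    rw [← h2, ← h0]
    calc min (lowerProfile a b 2) (lowerProfile a b 0)
        ≤ lowerProfile a b (-(x + y)) := min_lowerProfile_le hb ⟨by linarith, by linarith⟩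
      _ ≤ _ := lowerProfile_le a b hx (by linarith) (by linarith)

theorem stmt_9 (a b : ℝ) (hb : 1 < b) (hba : 0 < b - 2 * a + 1) :
    IsLeast ((fun p : ℝ × ℝ => (b + a * (p.1 + p.2) + p.1 * p.2) * (2 - p.1 - p.2)) ''
        {p : ℝ × ℝ | -1 ≤ p.1 ∧ p.1 ≤ 0 ∧ p.1 ≤ p.2 ∧ p.2 ≤ -p.1})
      (min (4 * (b - 2 * a + 1)) (2 * b - 2)) :=
  stmt_9_general a b hb
end

section
/- For t ∈ [1,2] and a ∈ [(3t+2)/4, 2], with w₁(t,a) = (2t+3)a - (3t²/4 + t), w₂(t,a) = (4t+4)a - (3t²/2 + 2t + 2), w₃(t,a) = 8ta - (3t² + 4t - 4), and W(t,a) = ((t+2)a - (t²/2 + t))(t+2), one has min{w₁,w₂,w₃} = w₁ and w₁(t,a)/W(t,a) ≤ 2/3. -/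
/-!
Everything is affine in `a` with nonnegative slope once `t ≥ 1`, so each inequality reduces to
its value at the left end point `a = (3t + 2)/4`, where it becomes a polynomial inequality in `t`
that factors: `w₂ - w₁` and `2W - 3w₁` acquire the factor `t - 1`, while `w₃ - w₁` becomes
`(9t² - 9t + 10)/4 > 0` and `W` becomes `(t + 2)³/4`.
-/

namespace RegionR₃

noncomputable section

def w₁ (t a : ℝ) : ℝ := (2 * t + 3) * a - (3 * t ^ 2 / 4 + t)

def w₂ (t a : ℝ) : ℝ := (4 * t + 4) * a - (3 * t ^ 2 / 2 + 2 * t + 2)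

def w₃ (t a : ℝ) : ℝ := 8 * t * a - (3 * t ^ 2 + 4 * t - 4)

def W (t a : ℝ) : ℝ := ((t + 2) * a - (t ^ 2 / 2 + t)) * (t + 2)

variable {t a : ℝ}

theorem w₁_le_w₂ (ht : 1 ≤ t) (ha : (3 * t + 2) / 4 ≤ a) : w₁ t a ≤ w₂ t a := by
  have key : w₂ t a - w₁ t a =
      (2 * t + 1) * (a - (3 * t + 2) / 4) + 3 * (t - 1) * (t + 2) / 4 := by
    unfold w₁ w₂; ring
  linarith [mul_nonneg (by linarith : (0 : ℝ) ≤ 2 * t + 1) (sub_nonneg.2 ha),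
    mul_nonneg (sub_nonneg.2 ht) (by linarith : (0 : ℝ) ≤ t + 2)]

theorem w₁_le_w₃ (ht : 1 / 2 ≤ t) (ha : (3 * t + 2) / 4 ≤ a) : w₁ t a ≤ w₃ t a := by
  have key : w₃ t a - w₁ t a =
      (6 * t - 3) * (a - (3 * t + 2) / 4) + (9 * (t - 1 / 2) ^ 2 + 31 / 4) / 4 := by
    unfold w₁ w₃; ring
  linarith [mul_nonneg (by linarith : (0 : ℝ) ≤ 6 * t - 3) (sub_nonneg.2 ha),
    sq_nonneg (t - 1 / 2)]

theorem W_pos (ht : -2 < t) (ha : (3 * t + 2) / 4 ≤ a) : 0 < W t a := by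
  have key : (t + 2) * a - (t ^ 2 / 2 + t) =
      (t + 2) * (a - (3 * t + 2) / 4) + (t + 2) ^ 2 / 4 := by
    ring
  have ht' : 0 < t + 2 := by linarith
  unfold W
  rw [key]
  have := mul_nonneg ht'.le (sub_nonneg.2 ha)
  positivity

theorem w₁_div_W_le (ht : 1 ≤ t) (ha : (3 * t + 2) / 4 ≤ a) : w₁ t a / W t a ≤ 2 / 3 := by
  have key : 2 * W t a - 3 * w₁ t a =
      (2 * t ^ 2 + 2 * t - 1) * (a - (3 * t + 2) / 4) + (t - 1) * (2 * t + 1) * (t + 2) / 4 := by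
    unfold w₁ W; ring
  rw [div_le_iff₀ (W_pos (by linarith) ha)]
  linarith [mul_nonneg (by nlinarith : (0 : ℝ) ≤ 2 * t ^ 2 + 2 * t - 1) (sub_nonneg.2 ha),
    mul_nonneg (mul_nonneg (sub_nonneg.2 ht) (by linarith : (0 : ℝ) ≤ 2 * t + 1))
      (by linarith : (0 : ℝ) ≤ t + 2)]

end

end RegionR₃

open RegionR₃ in
theorem stmt_12 (t a : ℝ) (ht : t ∈ Set.Icc (1:ℝ) 2)
    (ha : a ∈ Set.Icc ((3 * t + 2) / 4) 2) :
    min (min ((2 * t + 3) * a - (3 * t ^ 2 / 4 + t))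
          ((4 * t + 4) * a - (3 * t ^ 2 / 2 + 2 * t + 2)))
        (8 * t * a - (3 * t ^ 2 + 4 * t - 4))
      = (2 * t + 3) * a - (3 * t ^ 2 / 4 + t) ∧
    ((2 * t + 3) * a - (3 * t ^ 2 / 4 + t)) /
        (((t + 2) * a - (t ^ 2 / 2 + t)) * (t + 2)) ≤ 2 / 3 := by
  obtain ⟨ht, -⟩ := ht
  obtain ⟨ha, -⟩ := ha
  show min (min (w₁ t a) (w₂ t a)) (w₃ t a) = w₁ t a ∧ w₁ t a / W t a ≤ 2 / 3
  refine ⟨?_, w₁_div_W_le ht ha⟩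
  rw [min_eq_left (w₁_le_w₂ ht ha), min_eq_left (w₁_le_w₃ (by linarith) ha)]
end

section
/- For t ∈ [0, (14 - 4√10)/9], we have 8(2+3t)/((12 + 4t - t²)(2+t)) ≤ (68 - 5√10)/72, with equality at t = (14 - 4√10)/9. -/
/-!
The function `t ↦ 8(2+3t)/((12+4t-t²)(2+t))` is increasing on `[0, 1]`, an interval containing
`t₀ = (14 - 4√10)/9`, so its maximum on `[0, t₀]` is its value at `t₀`.
-/

open Real Set

noncomputable def weightRatio (t : ℝ) : ℝ :=
  8 * (2 + 3 * t) / ((12 + 4 * t - t ^ 2) * (2 + t))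

lemma weightRatio_denom_pos {t : ℝ} (ht : t ∈ Icc (0 : ℝ) 1) :
    0 < (12 + 4 * t - t ^ 2) * (2 + t) := by
  obtain ⟨h0, h1⟩ := ht
  have : 0 < 12 + 4 * t - t ^ 2 := by nlinarith
  positivity

lemma monotoneOn_weightRatio : MonotoneOn weightRatio (Icc 0 1) := by
  intro s hs t ht hst
  obtain ⟨hs0, hs1⟩ := hs
  obtain ⟨ht0, ht1⟩ := ht
  unfold weightRatio
  rw [div_le_div_iff₀ (weightRatio_denom_pos ⟨hs0, hs1⟩) (weightRatio_denom_pos ⟨ht0, ht1⟩)]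
  have hfactor : 8 * (2 + 3 * t) * ((12 + 4 * s - s ^ 2) * (2 + s))
      - 8 * (2 + 3 * s) * ((12 + 4 * t - t ^ 2) * (2 + t))
      = 8 * (t - s) * (32 - 4 * (t + s) + 2 * (t ^ 2 + t * s + s ^ 2) - 6 * s * t
          + 3 * s * t * (t + s)) := by
    ring
  have hcofactor : 0 ≤ 32 - 4 * (t + s) + 2 * (t ^ 2 + t * s + s ^ 2) - 6 * s * t
      + 3 * s * t * (t + s) := by
    nlinarith [mul_nonneg hs0 ht0, mul_le_one₀ hs1 ht0 ht1]
  nlinarith [mul_nonneg (sub_nonneg.2 hst) hcofactor]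

lemma sqrt_ten_mem_Icc : √10 ∈ Icc (3 : ℝ) (7 / 2) := by
  constructor
  · rw [le_sqrt (by norm_num) (by norm_num)]; norm_num
  · rw [sqrt_le_left (by norm_num)]; norm_num

lemma endpoint_mem_Icc : (14 - 4 * √10) / 9 ∈ Icc (0 : ℝ) 1 := by
  obtain ⟨h3, h72⟩ := sqrt_ten_mem_Icc
  constructor <;> linarith

lemma weightRatio_endpoint : weightRatio ((14 - 4 * √10) / 9) = (68 - 5 * √10) / 72 := by
  have hsq : √10 ^ 2 = 10 := sq_sqrt (by norm_num)
  unfold weightRatio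
  rw [div_eq_div_iff (weightRatio_denom_pos endpoint_mem_Icc).ne' (by norm_num)]
  linear_combination (-1408 / 729 - 6272 / 729 * √10 + 320 / 729 * √10 ^ 2) * hsq

theorem stmt_14 :
    (∀ t : ℝ, t ∈ Set.Icc (0:ℝ) ((14 - 4 * Real.sqrt 10) / 9) →
      8 * (2 + 3 * t) / ((12 + 4 * t - t ^ 2) * (2 + t))
        ≤ (68 - 5 * Real.sqrt 10) / 72) ∧
    8 * (2 + 3 * ((14 - 4 * Real.sqrt 10) / 9)) /
        ((12 + 4 * ((14 - 4 * Real.sqrt 10) / 9) - ((14 - 4 * Real.sqrt 10) / 9) ^ 2) *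
          (2 + (14 - 4 * Real.sqrt 10) / 9))
      = (68 - 5 * Real.sqrt 10) / 72 := by
  refine ⟨fun t ht => ?_, weightRatio_endpoint⟩
  have ht1 : t ∈ Icc (0 : ℝ) 1 := ⟨ht.1, ht.2.trans endpoint_mem_Icc.2⟩
  calc weightRatio t ≤ weightRatio ((14 - 4 * √10) / 9) :=
        monotoneOn_weightRatio ht1 endpoint_mem_Icc ht.2
    _ = (68 - 5 * √10) / 72 := weightRatio_endpoint
end

section
/- For t ∈ [(14 - 4√10)/9, 1/2], we have 6(t+2)/(-t³ + 12t + 16) ≤ (68 - 5√10)/72. -/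
/-!
Since `-t³ + 12t + 16 = (t + 2)²(4 - t)`, the quantity is `6 / ((t + 2)(4 - t))`. The denominator
`(t + 2)(4 - t) = 9 - (t - 1)²` increases on `t ≤ 1`, so the maximum over the interval is attained at
its left end `t₀ = (14 - 4√10)/9`, where the bound holds with equality.
-/

open Real

lemma neg_pow_three_add_twelve_mul_add_sixteen (t : ℝ) :
    -t ^ 3 + 12 * t + 16 = (t + 2) ^ 2 * (4 - t) := by
  ring

lemma six_mul_div_eq_six_div (t : ℝ) (ht : t + 2 ≠ 0) :
    6 * (t + 2) / (-t ^ 3 + 12 * t + 16) = 6 / ((t + 2) * (4 - t)) := by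
  rw [neg_pow_three_add_twelve_mul_add_sixteen, sq, mul_assoc, mul_comm 6, mul_div_mul_left _ _ ht]

lemma add_two_mul_four_sub_le {a t : ℝ} (hat : a ≤ t) (ht : t ≤ 1) :
    (a + 2) * (4 - a) ≤ (t + 2) * (4 - t) := by
  nlinarith

lemma six_div_at_left_end :
    6 / (((14 - 4 * √10) / 9 + 2) * (4 - (14 - 4 * √10) / 9)) = (68 - 5 * √10) / 72 := by
  have hs : √10 ^ 2 = 10 := sq_sqrt (by norm_num)
  have hpos : 0 < 272 + 20 * √10 := by positivity
  rw [div_eq_div_iff (by nlinarith) (by norm_num)]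
  nlinarith

theorem stmt_15 (t : ℝ)
    (ht : t ∈ Set.Icc ((14 - 4 * Real.sqrt 10) / 9) (1/2 : ℝ)) :
    6 * (t + 2) / (-t ^ 3 + 12 * t + 16) ≤ (68 - 5 * Real.sqrt 10) / 72 := by
  obtain ⟨hlo, hhi⟩ := ht
  have hs : √10 < 7 / 2 := by
    rw [sqrt_lt' (by norm_num)]; norm_num
  have hleft : 0 < ((14 - 4 * √10) / 9 + 2) * (4 - (14 - 4 * √10) / 9) := by
    apply mul_pos <;> linarith
  rw [six_mul_div_eq_six_div t (by linarith), ← six_div_at_left_end]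
  exact div_le_div_of_nonneg_left (by norm_num) hleft
    (add_two_mul_four_sub_le hlo (by linarith))
end

section
/- For a = 5/3, b = 11/3, and f(x₁,x₂) = (11/3 + (5/3)(x₁+x₂) + x₁x₂)(2 - x₁ - x₂) on X^H = [-1,1]² \ (0,1]², the minimum of f over X^H equals 16/3 and the maximum equals (4352 + 320√10)/729. -/
/-!
The function is concave in each variable separately (the coefficient of `x²` is `-(5/3 + y)`),
so on each of the rectangles `[-1,0] × [-1,1]` and `[-1,1] × [-1,0]` covering `X^H` its minimum
is attained at a corner, where it takes the values `16/3` and `6`.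

For the maximum, `xy ≤ ((x+y)/2)²` and `2 - x - y ≥ 0` reduce to the diagonal. There the cubic
`t ↦ f(t,t)` has its local maximum at `t₀ = (2√10 - 7)/9 ∈ X^H`, and
`f(t₀,t₀) - f(t,t) = 2/729 · (9t - 2√10 + 7)² (9t + 4√10 + 7) ≥ 0` for `t ≥ -1`.
-/

open Set

lemma concaveOn_univ_quadratic {a : ℝ} (ha : a ≤ 0) (b c : ℝ) :
    ConcaveOn ℝ univ (fun x => a * x ^ 2 + b * x + c) := by
  refine ⟨convex_univ, fun x _ y _ s t hs ht hst => ?_⟩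
  obtain rfl : t = 1 - s := by linarith
  simp only [smul_eq_mul]
  nlinarith [mul_nonneg (mul_nonneg (mul_nonneg hs ht) (sq_nonneg (x - y))) (neg_nonneg.2 ha)]

lemma le_of_concaveOn_rectangle {g : ℝ → ℝ → ℝ} {a b c d m x y : ℝ}
    (hgx : ∀ y ∈ Icc c d, ConcaveOn ℝ (Icc a b) (g · y))
    (hgy : ∀ x ∈ Icc a b, ConcaveOn ℝ (Icc c d) (g x))
    (hac : m ≤ g a c) (had : m ≤ g a d) (hbc : m ≤ g b c) (hbd : m ≤ g b d)
    (hx : x ∈ Icc a b) (hy : y ∈ Icc c d) : m ≤ g x y := by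
  have hab : a ≤ b := hx.1.trans hx.2
  have hcd : c ≤ d := hy.1.trans hy.2
  have edge : ∀ x' ∈ Icc a b, m ≤ g x' c → m ≤ g x' d → m ≤ g x' y := fun x' hx' h₁ h₂ =>
    (le_min h₁ h₂).trans <|
      (hgy x' hx').min_le_of_mem_Icc (left_mem_Icc.2 hcd) (right_mem_Icc.2 hcd) hy
  have ha : a ∈ Icc a b := left_mem_Icc.2 hab
  have hb : b ∈ Icc a b := right_mem_Icc.2 hab
  exact (le_min (edge a ha hac had) (edge b hb hbc hbd)).trans <|
    (hgx y hy).min_le_of_mem_Icc ha hb hx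

noncomputable def spaiSymbol (x y : ℝ) : ℝ := (11/3 + (5/3) * (x + y) + x * y) * (2 - x - y)

lemma spaiSymbol_comm (x y : ℝ) : spaiSymbol x y = spaiSymbol y x := by
  unfold spaiSymbol; ring

lemma concaveOn_spaiSymbol_left {y : ℝ} (hy : -5/3 ≤ y) : ConcaveOn ℝ univ (spaiSymbol · y) := by
  have h := concaveOn_univ_quadratic (a := -(5/3 + y)) (by linarith)
    ((5/3 + y) * (2 - y) - (11/3 + 5/3 * y)) ((11/3 + 5/3 * y) * (2 - y))
  convert h using 2 with x
  unfold spaiSymbol; ring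

lemma concaveOn_spaiSymbol_right {x : ℝ} (hx : -5/3 ≤ x) : ConcaveOn ℝ univ (spaiSymbol x) := by
  rw [show spaiSymbol x = (spaiSymbol · x) from funext (spaiSymbol_comm x)]
  exact concaveOn_spaiSymbol_left hx

lemma spaiSymbol_le_spaiSymbol_midpoint {x y : ℝ} (h : x + y ≤ 2) :
    spaiSymbol x y ≤ spaiSymbol ((x + y) / 2) ((x + y) / 2) := by
  unfold spaiSymbol
  nlinarith [mul_nonneg (sq_nonneg (x - y)) (sub_nonneg.2 h)]

lemma spaiSymbol_diag_le {t : ℝ} (ht : -1 ≤ t) :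
    spaiSymbol t t ≤ spaiSymbol ((2 * √10 - 7) / 9) ((2 * √10 - 7) / 9) := by
  have h10 : √10 ^ 2 = 10 := Real.sq_sqrt (by norm_num)
  have h3 : 3 ≤ √10 := Real.le_sqrt_of_sq_le (by norm_num)
  have key : 0 ≤ (9 * t - 2 * √10 + 7) ^ 2 * (9 * t + 4 * √10 + 7) :=
    mul_nonneg (sq_nonneg _) (by linarith)
  unfold spaiSymbol
  linear_combination (2 / 729) * key + (16 / 243 * √10 - 8 / 27 * t - 56 / 243) * h10

lemma spaiSymbol_max : spaiSymbol ((2 * √10 - 7) / 9) ((2 * √10 - 7) / 9)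
    = (4352 + 320 * √10) / 729 := by
  have h10 : √10 ^ 2 = 10 := Real.sq_sqrt (by norm_num)
  unfold spaiSymbol
  linear_combination (-(16/729) * √10) * h10

lemma sixteen_thirds_le_spaiSymbol {x y : ℝ} (hx : x ∈ Icc (-1) 0) (hy : y ∈ Icc (-1) 1) :
    16 / 3 ≤ spaiSymbol x y := by
  refine le_of_concaveOn_rectangle (fun y hy => ?_) (fun x hx => ?_) ?_ ?_ ?_ ?_ hx hy
  · exact (concaveOn_spaiSymbol_left (by linarith [hy.1])).subset (subset_univ _) (convex_Icc _ _)
  · exact (concaveOn_spaiSymbol_right (by linarith [hx.1])).subset (subset_univ _) (convex_Icc _ _)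
  all_goals norm_num [spaiSymbol]

theorem stmt_16 :
    IsLeast ((fun p : ℝ × ℝ =>
        (11/3 + (5/3) * (p.1 + p.2) + p.1 * p.2) * (2 - p.1 - p.2)) ''
      {p : ℝ × ℝ |
        (p.1 ∈ Set.Icc (-1:ℝ) 1 ∧ p.2 ∈ Set.Icc (-1:ℝ) 1) ∧
        ¬(p.1 ∈ Set.Ioc (0:ℝ) 1 ∧ p.2 ∈ Set.Ioc (0:ℝ) 1)}) (16/3) ∧
    IsGreatest ((fun p : ℝ × ℝ =>
        (11/3 + (5/3) * (p.1 + p.2) + p.1 * p.2) * (2 - p.1 - p.2)) ''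
      {p : ℝ × ℝ |
        (p.1 ∈ Set.Icc (-1:ℝ) 1 ∧ p.2 ∈ Set.Icc (-1:ℝ) 1) ∧
        ¬(p.1 ∈ Set.Ioc (0:ℝ) 1 ∧ p.2 ∈ Set.Ioc (0:ℝ) 1)})
      ((4352 + 320 * Real.sqrt 10) / 729) := by
  change IsLeast ((fun p : ℝ × ℝ => spaiSymbol p.1 p.2) '' _) _ ∧
    IsGreatest ((fun p : ℝ × ℝ => spaiSymbol p.1 p.2) '' _) _
  refine ⟨⟨⟨(1, 0), by norm_num, by norm_num [spaiSymbol]⟩, ?_⟩,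
    ⟨⟨((2 * √10 - 7) / 9, (2 * √10 - 7) / 9), ?_, spaiSymbol_max⟩, ?_⟩⟩
  · rintro _ ⟨⟨x, y⟩, ⟨⟨⟨hx1, hx2⟩, hy1, hy2⟩, hne⟩, rfl⟩
    have hxy : x ≤ 0 ∨ y ≤ 0 := by
      by_contra! h
      exact hne ⟨⟨h.1, hx2⟩, h.2, hy2⟩
    show 16 / 3 ≤ spaiSymbol x y
    rcases hxy with hx0 | hy0
    · exact sixteen_thirds_le_spaiSymbol ⟨hx1, hx0⟩ ⟨hy1, hy2⟩
    · rw [spaiSymbol_comm]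
      exact sixteen_thirds_le_spaiSymbol ⟨hy1, hy0⟩ ⟨hx1, hx2⟩
  · have h10 : √10 ^ 2 = 10 := Real.sq_sqrt (by norm_num)
    have h3 : 3 ≤ √10 := Real.le_sqrt_of_sq_le (by norm_num)
    have hneg : (2 * √10 - 7) / 9 ≤ 0 := by nlinarith
    exact ⟨⟨⟨by linarith, by linarith⟩, by linarith, by linarith⟩, fun h => h.1.1.not_ge hneg⟩
  · rintro _ ⟨⟨x, y⟩, ⟨⟨⟨hx1, hx2⟩, hy1, hy2⟩, -⟩, rfl⟩
    calc spaiSymbol x y ≤ spaiSymbol ((x + y) / 2) ((x + y) / 2) :=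
          spaiSymbol_le_spaiSymbol_midpoint (by linarith)
      _ ≤ _ := spaiSymbol_diag_le (by linarith)
      _ = _ := spaiSymbol_max
end
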